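/- arXiv:2501.04705 — 5 statements merged into one kernel-verified Lean document; each statement's English description precedes it below -/
import Mathlib

section
/- There exists a continuous surjective map 𝒫 : [0,1] → [0,1]^2 satisfying the Hölder condition ‖𝒫(t) − 𝒫(s)‖ ≤ M·|t−s|^{1/2} for all s, t ∈ [0,1], for some constant M. -/
/-!
The discrete Hilbert curve of order `n` runs through the `4 ^ n` cells of the grid of mesh `2⁻¹ ^ n`
on the unit square, each cell adjacent to the previous one; it is built by running through the
four quadrants, each with a suitably transposed copy of the curve of order `n - 1`, so the `k`-th
cell of order `n + 1` lies inside the `k / 4`-th cell of order `n`. Sampling the cell of order `n`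
at time `⌊4 ^ n t⌋` gives approximations that move by at most `2⁻¹ ^ (n + 1)` from one order to
the next, hence converge uniformly at rate `2⁻¹ ^ n`. Two times at distance at most `4⁻¹ ^ n`
sample equal or adjacent cells, so the limit moves by at most `3 * 2⁻¹ ^ n` between them: this is
Hölder continuity of exponent `1/2`. Every point of the square lies within `2⁻¹ ^ n` of a cell of
order `n`, and the image of `[0, 1]` is compact, so the curve is onto.
-/

open Set
open scoped NNReal

theorem holderOnWith_half_of_dist_le {X Y : Type*} [MetricSpace X] [PseudoMetricSpace Y]
    {f : X → Y} {s : Set X} {C : ℝ≥0} (hs : ∀ x ∈ s, ∀ y ∈ s, dist x y ≤ 1)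
    (hf : ∀ n : ℕ, ∀ x ∈ s, ∀ y ∈ s, dist x y ≤ 1 / 4 ^ n → dist (f x) (f y) ≤ C / 2 ^ n) :
    HolderOnWith (2 * C) (1 / 2) f s := by
  intro x hx y hy
  rw [edist_nndist, edist_nndist, ← ENNReal.coe_rpow_of_nonneg _ (by positivity),
    ← ENNReal.coe_mul, ENNReal.coe_le_coe, ← NNReal.coe_le_coe]
  push_cast
  rw [← Real.sqrt_eq_rpow]
  rcases eq_or_ne x y with rfl | hxy
  · simp
  obtain ⟨n, hlow, hup⟩ := exists_nat_pow_near_of_lt_one (dist_pos.2 hxy) (hs x hx y hy)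
    (by norm_num : (0 : ℝ) < 1 / 4) (by norm_num)
  have hsqrt : √((1 / 4 : ℝ) ^ (n + 1)) = (1 / 2) ^ (n + 1) := by
    rw [show (1 / 4 : ℝ) = (1 / 2) ^ 2 by norm_num, ← pow_mul, mul_comm, pow_mul,
      Real.sqrt_sq (by positivity)]
  calc dist (f x) (f y) ≤ C / 2 ^ n := hf n x hx y hy (by rwa [one_div_pow] at hup)
    _ = 2 * C * √((1 / 4 : ℝ) ^ (n + 1)) := by rw [hsqrt, one_div_pow, pow_succ]; field_simp
    _ ≤ 2 * C * √(dist x y) := by gcongr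

namespace HilbertCurve

/-- Places a grid path of order `n` into quadrant `q` of the grid of order `n + 1`; the quadrants
are visited lower-left, upper-left, upper-right, lower-right, and the first copy is transposed and
the last one reflected in the antidiagonal so that consecutive copies join up. -/
def quadrantMap (n q : ℕ) (p : ℤ × ℤ) : ℤ × ℤ :=
  if q = 0 then (p.2, p.1)
  else if q = 1 then (p.1, p.2 + 2 ^ n)
  else if q = 2 then (p.1 + 2 ^ n, p.2 + 2 ^ n)
  else (2 ^ (n + 1) - 1 - p.2, 2 ^ n - 1 - p.1)

def cell : ℕ → ℕ → ℤ × ℤ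
  | 0, _ => (0, 0)
  | n + 1, k => quadrantMap n (k / 4 ^ n) (cell n (k % 4 ^ n))

def grid (n : ℕ) : Set (ℤ × ℤ) := Ico 0 (2 ^ n) ×ˢ Ico 0 (2 ^ n)

-- Division on `ℤ` rounds down, so this is the cell of the coarser grid containing `p`.
def halve (p : ℤ × ℤ) : ℤ × ℤ := (p.1 / 2, p.2 / 2)

lemma mapsTo_quadrantMap (n q : ℕ) : MapsTo (quadrantMap n q) (grid n) (grid (n + 1)) := by
  rintro ⟨x, y⟩ ⟨⟨hx₀, hx₁⟩, hy₀, hy₁⟩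
  have h2 : (2 : ℤ) ^ (n + 1) = 2 * 2 ^ n := pow_succ' 2 n
  simp only [grid, quadrantMap, h2, mem_prod, mem_Ico] at *
  split_ifs <;> simp only <;> omega

lemma grid_subset_iUnion_quadrantMap (n : ℕ) :
    grid (n + 1) ⊆ ⋃ q < 4, quadrantMap n q '' grid n := by
  rintro ⟨x, y⟩ ⟨⟨hx₀, hx₁⟩, hy₀, hy₁⟩
  have h2 : (2 : ℤ) ^ (n + 1) = 2 * 2 ^ n := pow_succ' 2 n
  simp only [h2, grid, mem_iUnion, mem_image, mem_prod, mem_Ico, Prod.exists, quadrantMap] at *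
  rcases lt_or_ge x (2 ^ n) with hx | hx <;> rcases lt_or_ge y (2 ^ n) with hy | hy
  · exact ⟨0, by norm_num, y, x, by simp; omega⟩
  · exact ⟨1, by norm_num, x, y - 2 ^ n, by simp; omega⟩
  · exact ⟨3, by norm_num, 2 ^ n - 1 - y, 2 * 2 ^ n - 1 - x, by simp; omega⟩
  · exact ⟨2, by norm_num, x - 2 ^ n, y - 2 ^ n, by simp; omega⟩

lemma isometry_quadrantMap (n q : ℕ) : Isometry (quadrantMap n q) := by
  refine Isometry.of_dist_eq fun p p' => ?_
  simp only [quadrantMap, Prod.dist_eq, Int.dist_eq']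
  split_ifs
  · exact max_comm _ _
  · simp
  · simp
  · simp only [sub_sub_sub_cancel_left, abs_sub_comm p'.1, abs_sub_comm p'.2, max_comm]

lemma halve_quadrantMap (n q : ℕ) (p : ℤ × ℤ) :
    halve (quadrantMap (n + 1) q p) = quadrantMap n q (halve p) := by
  have h2 : (2 : ℤ) ^ (n + 1) = 2 * 2 ^ n := pow_succ' 2 n
  have h4 : (2 : ℤ) ^ (n + 1 + 1) = 2 * (2 * 2 ^ n) := by rw [pow_succ', h2]
  simp only [halve, quadrantMap, h2, h4]
  generalize (2 : ℤ) ^ n = m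
  split_ifs <;> ext <;> dsimp only <;> omega

lemma cell_mem_grid (n k : ℕ) : cell n k ∈ grid n := by
  induction n generalizing k with
  | zero => simp [cell, grid]
  | succ n ih => exact mapsTo_quadrantMap n _ (ih _)

lemma cell_zero (n : ℕ) : cell n 0 = (0, 0) := by
  induction n with
  | zero => rfl
  | succ n ih => simp [cell, ih, quadrantMap]

lemma cell_last (n : ℕ) : cell n (4 ^ n - 1) = (2 ^ n - 1, 0) := by
  induction n with
  | zero => rfl
  | succ n ih =>
    have h4 : 0 < 4 ^ n := by positivity
    have hk : 4 ^ (n + 1) - 1 = 4 ^ n * 3 + (4 ^ n - 1) := by rw [pow_succ]; omega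
    rw [cell, hk, Nat.mul_add_div h4, Nat.mul_add_mod, Nat.div_eq_of_lt (by omega),
      Nat.mod_eq_of_lt (by omega), ih]
    simp [quadrantMap]

lemma cell_succ_mul_add (n q : ℕ) {r : ℕ} (hr : r < 4 ^ n) :
    cell (n + 1) (4 ^ n * q + r) = quadrantMap n q (cell n r) := by
  have h4 : 0 < 4 ^ n := by positivity
  rw [cell, Nat.mul_add_div h4, Nat.div_eq_of_lt hr, Nat.mul_add_mod, Nat.mod_eq_of_lt hr,
    add_zero]

lemma dist_cell_succ_le (n k : ℕ) (hk : k + 1 < 4 ^ n) :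
    dist (cell n k) (cell n (k + 1)) ≤ 1 := by
  induction n generalizing k with
  | zero => simp at hk
  | succ n ih =>
    have h4 : 0 < 4 ^ n := by positivity
    obtain ⟨q, r, hr, rfl⟩ : ∃ q r, r < 4 ^ n ∧ k = 4 ^ n * q + r :=
      ⟨k / 4 ^ n, k % 4 ^ n, Nat.mod_lt _ h4, (Nat.div_add_mod k _).symm⟩
    rcases lt_or_eq_of_le (Nat.succ_le_of_lt hr) with hr' | hr'
    · rw [add_assoc, cell_succ_mul_add n q hr, cell_succ_mul_add n q hr',
        (isometry_quadrantMap n q).dist_eq]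
      exact ih r hr'
    · have hq : q < 3 := by
        by_contra! hq
        rw [pow_succ] at hk
        nlinarith
      have hk' : 4 ^ n * q + r + 1 = 4 ^ n * (q + 1) + 0 := by rw [Nat.mul_succ]; omega
      rw [hk', cell_succ_mul_add n q hr, cell_succ_mul_add n _ h4, cell_zero,
        show r = 4 ^ n - 1 by omega, cell_last]
      interval_cases q <;> simp [quadrantMap, Prod.dist_eq, Int.dist_eq', pow_succ]
      exact abs_le.2 ⟨by linarith, by linarith⟩

lemma halve_cell_succ (n k : ℕ) : halve (cell (n + 1) k) = cell n (k / 4) := by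
  induction n generalizing k with
  | zero =>
    simp only [cell, quadrantMap, halve]
    split_ifs <;> rfl
  | succ n ih =>
    rw [cell, halve_quadrantMap, ih, cell, Nat.div_div_eq_div_mul, ← pow_succ', pow_succ',
      Nat.mod_mul_right_div_self]

lemma grid_subset_image_cell (n : ℕ) : grid n ⊆ cell n '' Iio (4 ^ n) := by
  induction n with
  | zero =>
    rintro ⟨x, y⟩ ⟨⟨hx₀, hx₁⟩, hy₀, hy₁⟩
    refine ⟨0, by simp, ?_⟩
    simp only [pow_zero] at hx₁ hy₁
    simp only [cell, Prod.mk.injEq]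
    omega
  | succ n ih =>
    intro p hp
    obtain ⟨q, hq, p', hp', rfl⟩ : ∃ q < 4, ∃ p' ∈ grid n, quadrantMap n q p' = p := by
      simpa using grid_subset_iUnion_quadrantMap n hp
    obtain ⟨r, hr, rfl⟩ := ih hp'
    refine ⟨4 ^ n * q + r, ?_, cell_succ_mul_add n q hr⟩
    rw [mem_Iio] at hr ⊢
    rw [pow_succ]
    nlinarith

noncomputable def toSquare (n : ℕ) (p : ℤ × ℤ) : ℝ × ℝ := ((p.1 : ℝ) / 2 ^ n, (p.2 : ℝ) / 2 ^ n)

lemma dist_toSquare (n : ℕ) (p p' : ℤ × ℤ) :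
    dist (toSquare n p) (toSquare n p') = dist p p' / 2 ^ n := by
  have h : (0 : ℝ) < 2 ^ n := by positivity
  simp only [toSquare, Prod.dist_eq, Real.dist_eq, Int.dist_eq, ← sub_div, abs_div, abs_of_pos h,
    max_div_div_right h.le]

lemma toSquare_mem {n : ℕ} {p : ℤ × ℤ} (hp : p ∈ grid n) : toSquare n p ∈ Icc 0 1 ×ˢ Icc 0 1 := by
  have h : (0 : ℝ) < 2 ^ n := by positivity
  obtain ⟨⟨hx₀, hx₁⟩, hy₀, hy₁⟩ := hp
  have hx : (p.1 : ℝ) ≤ 2 ^ n := by exact_mod_cast hx₁.le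
  have hy : (p.2 : ℝ) ≤ 2 ^ n := by exact_mod_cast hy₁.le
  exact ⟨⟨div_nonneg (by exact_mod_cast hx₀) h.le, (div_le_one h).2 hx⟩,
    div_nonneg (by exact_mod_cast hy₀) h.le, (div_le_one h).2 hy⟩

lemma abs_sub_div_two_le (n : ℕ) (x : ℤ) :
    |(x : ℝ) / 2 ^ (n + 1) - ((x / 2 : ℤ) : ℝ) / 2 ^ n| ≤ 1 / 2 / 2 ^ n := by
  have hx : (x : ℝ) - 2 * ((x / 2 : ℤ) : ℝ) ∈ Icc 0 1 := by
    constructor <;> norm_cast <;> omega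
  have e : (x : ℝ) / 2 ^ (n + 1) - ((x / 2 : ℤ) : ℝ) / 2 ^ n
      = ((x : ℝ) - 2 * ((x / 2 : ℤ) : ℝ)) / 2 / 2 ^ n := by
    rw [pow_succ]; field_simp
  rw [e, abs_of_nonneg (div_nonneg (div_nonneg hx.1 zero_le_two) (by positivity))]
  gcongr
  exact hx.2

lemma dist_toSquare_halve_le (n : ℕ) (p : ℤ × ℤ) :
    dist (toSquare (n + 1) p) (toSquare n (halve p)) ≤ 1 / 2 / 2 ^ n :=
  max_le (abs_sub_div_two_le n p.1) (abs_sub_div_two_le n p.2)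

lemma exists_abs_sub_div_two_pow_le (n : ℕ) {x : ℝ} (hx : x ∈ Icc 0 1) :
    ∃ i ∈ Ico (0 : ℤ) (2 ^ n), |x - i / 2 ^ n| ≤ 1 / 2 ^ n := by
  have h : (0 : ℝ) < 2 ^ n := by positivity
  set i := min ⌊(2 : ℝ) ^ n * x⌋ (2 ^ n - 1)
  have hi₁ : (i : ℝ) ≤ 2 ^ n * x :=
    (Int.cast_le.2 (min_le_left _ _)).trans (Int.floor_le _)
  have hi₂ : 2 ^ n * x ≤ i + 1 := by
    obtain hi | hi : i = ⌊(2 : ℝ) ^ n * x⌋ ∨ i = 2 ^ n - 1 := min_choice _ _ <;> rw [hi]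
    · exact (Int.lt_floor_add_one _).le
    · push_cast; nlinarith [hx.2]
  have e : x - i / 2 ^ n = (2 ^ n * x - i) / 2 ^ n := by field_simp
  refine ⟨i, ⟨le_min (Int.floor_nonneg.2 (mul_nonneg h.le hx.1)) ?_, ?_⟩, ?_⟩
  · exact sub_nonneg.2 (one_le_pow₀ (by norm_num))
  · exact (min_le_right _ _).trans_lt (sub_one_lt _)
  · rw [e, abs_div, abs_of_pos h]
    gcongr
    exact abs_le.2 ⟨by linarith, by linarith⟩

lemma exists_dist_toSquare_le (n : ℕ) {z : ℝ × ℝ} (hz : z ∈ Icc 0 1 ×ˢ Icc 0 1) :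
    ∃ p ∈ grid n, dist z (toSquare n p) ≤ 1 / 2 ^ n := by
  obtain ⟨i, hi, hzi⟩ := exists_abs_sub_div_two_pow_le n hz.1
  obtain ⟨j, hj, hzj⟩ := exists_abs_sub_div_two_pow_le n hz.2
  exact ⟨(i, j), ⟨hi, hj⟩, max_le hzi hzj⟩

-- Clamped so that `t = 1` falls into the last cell rather than past it.
noncomputable def cellIndex (n : ℕ) (t : ℝ) : ℕ := min ⌊4 ^ n * t⌋₊ (4 ^ n - 1)

lemma cellIndex_lt (n : ℕ) (t : ℝ) : cellIndex n t < 4 ^ n :=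
  (min_le_right _ _).trans_lt (Nat.sub_one_lt (by positivity))

lemma cellIndex_succ_div_four (n : ℕ) (t : ℝ) : cellIndex (n + 1) t / 4 = cellIndex n t := by
  have hfloor : ⌊(4 : ℝ) ^ (n + 1) * t⌋₊ / 4 = ⌊(4 : ℝ) ^ n * t⌋₊ := by
    rw [← Nat.floor_div_natCast, pow_succ]
    congr 1
    push_cast
    ring
  have hlast : (4 ^ (n + 1) - 1) / 4 = 4 ^ n - 1 := by
    have : 0 < 4 ^ n := by positivity
    rw [pow_succ]
    omega
  have hmono : Monotone (· / 4 : ℕ → ℕ) := fun _ _ h => Nat.div_le_div_right h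
  rw [cellIndex, hmono.map_min, hfloor, hlast, cellIndex]

lemma cellIndex_mono (n : ℕ) : Monotone (cellIndex n) := fun _ _ h =>
  min_le_min_right _ (Nat.floor_mono (by gcongr))

lemma cellIndex_le_add_one {n : ℕ} {s t : ℝ} (hs : 0 ≤ s) (h : t ≤ s + 1 / 4 ^ n) :
    cellIndex n t ≤ cellIndex n s + 1 := by
  have hfloor : ⌊(4 : ℝ) ^ n * t⌋₊ ≤ ⌊(4 : ℝ) ^ n * s⌋₊ + 1 := by
    rw [← Nat.floor_add_one (by positivity)]
    refine Nat.floor_mono ?_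
    calc (4 : ℝ) ^ n * t ≤ 4 ^ n * (s + 1 / 4 ^ n) := by gcongr
      _ = 4 ^ n * s + 1 := by field_simp
  unfold cellIndex
  omega

lemma cellIndex_natCast_div {n k : ℕ} (hk : k < 4 ^ n) : cellIndex n (k / 4 ^ n) = k := by
  rw [cellIndex, mul_div_cancel₀ _ (by positivity), Nat.floor_natCast]
  omega

noncomputable def approx (n : ℕ) (t : ℝ) : ℝ × ℝ := toSquare n (cell n (cellIndex n t))

lemma approx_mem (n : ℕ) (t : ℝ) : approx n t ∈ Icc 0 1 ×ˢ Icc 0 1 :=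
  toSquare_mem (cell_mem_grid _ _)

lemma dist_approx_succ_le (n : ℕ) (t : ℝ) :
    dist (approx n t) (approx (n + 1) t) ≤ 1 / 2 / 2 ^ n := by
  rw [dist_comm, approx, approx, ← cellIndex_succ_div_four n t, ← halve_cell_succ]
  exact dist_toSquare_halve_le _ _

lemma dist_approx_le {n : ℕ} {s t : ℝ} (hs : 0 ≤ s) (hst : s ≤ t) (h : t ≤ s + 1 / 4 ^ n) :
    dist (approx n s) (approx n t) ≤ 1 / 2 ^ n := by
  rw [approx, approx, dist_toSquare]
  gcongr
  rcases (cellIndex_mono n hst).eq_or_lt with heq | hlt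
  · rw [heq, dist_self]
    exact zero_le_one
  · have hsucc : cellIndex n t = cellIndex n s + 1 := le_antisymm (cellIndex_le_add_one hs h) hlt
    rw [hsucc]
    exact dist_cell_succ_le n _ (hsucc ▸ cellIndex_lt n t)

lemma exists_dist_approx_le (n : ℕ) {z : ℝ × ℝ} (hz : z ∈ Icc 0 1 ×ˢ Icc 0 1) :
    ∃ t ∈ Icc 0 1, dist z (approx n t) ≤ 1 / 2 ^ n := by
  obtain ⟨p, hp, hzp⟩ := exists_dist_toSquare_le n hz
  obtain ⟨k, hk, rfl⟩ := grid_subset_image_cell n hp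
  refine ⟨k / 4 ^ n, ⟨by positivity, div_le_one_of_le₀ ?_ (by positivity)⟩, ?_⟩
  · exact_mod_cast (mem_Iio.1 hk).le
  · rwa [approx, cellIndex_natCast_div hk]

end HilbertCurve

open HilbertCurve Filter Topology

noncomputable def hilbertCurve (t : ℝ) : ℝ × ℝ := limUnder atTop (approx · t)

lemma tendsto_approx_hilbertCurve (t : ℝ) :
    Tendsto (approx · t) atTop (𝓝 (hilbertCurve t)) :=
  (cauchySeq_of_le_geometric_two fun n => dist_approx_succ_le n t).tendsto_limUnder

lemma dist_approx_hilbertCurve_le (n : ℕ) (t : ℝ) :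
    dist (approx n t) (hilbertCurve t) ≤ 1 / 2 ^ n :=
  dist_le_of_le_geometric_two_of_tendsto (fun n => dist_approx_succ_le n t)
    (tendsto_approx_hilbertCurve t) n

lemma hilbertCurve_mem (t : ℝ) : hilbertCurve t ∈ Icc 0 1 ×ˢ Icc 0 1 :=
  (isClosed_Icc.prod isClosed_Icc).mem_of_tendsto (tendsto_approx_hilbertCurve t)
    (Eventually.of_forall fun n => approx_mem n t)

lemma dist_hilbertCurve_le {n : ℕ} {s t : ℝ} (hs : 0 ≤ s) (hst : s ≤ t)
    (h : t ≤ s + 1 / 4 ^ n) :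
    dist (hilbertCurve s) (hilbertCurve t) ≤ 3 / 2 ^ n :=
  calc dist (hilbertCurve s) (hilbertCurve t)
      ≤ dist (hilbertCurve s) (approx n s) + dist (approx n s) (approx n t) +
          dist (approx n t) (hilbertCurve t) := dist_triangle4 _ _ _ _
    _ ≤ 1 / 2 ^ n + 1 / 2 ^ n + 1 / 2 ^ n := by
      gcongr
      · exact dist_comm (hilbertCurve s) _ ▸ dist_approx_hilbertCurve_le n s
      · exact dist_approx_le hs hst h
      · exact dist_approx_hilbertCurve_le n t
    _ = 3 / 2 ^ n := by ring

theorem holderOnWith_hilbertCurve : HolderOnWith 6 (1 / 2) hilbertCurve (Icc 0 1) := by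
  have hscale : ∀ n : ℕ, ∀ s ∈ Icc (0 : ℝ) 1, ∀ t ∈ Icc (0 : ℝ) 1, dist s t ≤ 1 / 4 ^ n →
      dist (hilbertCurve s) (hilbertCurve t) ≤ (3 : ℝ≥0) / 2 ^ n := by
    intro n s hs t ht hst
    rw [Real.dist_eq, abs_le] at hst
    push_cast
    rcases le_total s t with h | h
    · exact dist_hilbertCurve_le hs.1 h (by linarith)
    · exact dist_comm (hilbertCurve s) _ ▸ dist_hilbertCurve_le ht.1 h (by linarith)
  have h := holderOnWith_half_of_dist_le (fun x hx y hy => Real.dist_le_of_mem_Icc_01 hx hy) hscale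
  rwa [show (2 * 3 : ℝ≥0) = 6 by norm_num] at h

theorem image_hilbertCurve : hilbertCurve '' Icc 0 1 = Icc 0 1 ×ˢ Icc 0 1 := by
  refine (image_subset_iff.2 fun t _ => hilbertCurve_mem t).antisymm fun z hz => ?_
  have hclosed := (isCompact_Icc.image_of_continuousOn
    (holderOnWith_hilbertCurve.continuousOn (by norm_num))).isClosed
  rw [← hclosed.closure_eq, Metric.mem_closure_iff]
  intro ε hε
  obtain ⟨n, hn⟩ := exists_pow_lt_of_lt_one (half_pos hε) one_half_lt_one
  obtain ⟨t, ht, hzt⟩ := exists_dist_approx_le n hz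
  refine ⟨hilbertCurve t, mem_image_of_mem _ ht, ?_⟩
  rw [one_div_pow] at hn
  calc dist z (hilbertCurve t) ≤ dist z (approx n t) + dist (approx n t) (hilbertCurve t) :=
        dist_triangle _ _ _
    _ ≤ 1 / 2 ^ n + 1 / 2 ^ n := add_le_add hzt (dist_approx_hilbertCurve_le n t)
    _ < ε := by linarith

/-- There exists a continuous surjection `𝒫` from `[0,1]` onto the unit square
which is Hölder of exponent `1/2`: `‖𝒫 t - 𝒫 s‖ ≤ M * |t - s| ^ (1/2)`. -/
theorem exists_holder_space_filling_curve :
    ∃ (P : ℝ → ℝ × ℝ) (M : ℝ),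
      ContinuousOn P (Set.Icc (0 : ℝ) 1) ∧
      P '' Set.Icc (0 : ℝ) 1 = Set.Icc (0 : ℝ) 1 ×ˢ Set.Icc (0 : ℝ) 1 ∧
      ∀ s ∈ Set.Icc (0 : ℝ) 1, ∀ t ∈ Set.Icc (0 : ℝ) 1,
        ‖P t - P s‖ ≤ M * |t - s| ^ ((1 : ℝ) / 2) := by
  refine ⟨hilbertCurve, 6, holderOnWith_hilbertCurve.continuousOn (by norm_num),
    image_hilbertCurve, fun s hs t ht => ?_⟩
  have h := holderOnWith_hilbertCurve.dist_le ht hs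
  rw [dist_eq_norm, Real.dist_eq] at h
  exact_mod_cast h
end

section
/- If f : [0,1] → ℝ^n is continuous, then the image f([0,1]) is weakly locally connected: for all a ∈ f([0,1]) and η > 0, there exists 0 < ε < η such that every x ∈ f([0,1]) with ‖x − a‖ < ε lies in the same connected component of f([0,1]) ∩ B_η(a) as a. -/
/-!
Let `C` be the connected component of `a` in `f([0,1]) ∩ B_η(a)`. Since `[0,1]` is locally
connected, the parameters `t` with `f t ∈ C` form an open subset of `[0,1]`: a connected
neighbourhood of `t` inside `f⁻¹(B_η(a))` is mapped into `C`. Its complement is compact, so its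
image is a compact set missing `a`, and any ball around `a` avoiding that image does the job.
-/

open Set Topology

variable {X Y : Type*} [TopologicalSpace X] [TopologicalSpace Y]

theorem isOpen_preimage_connectedComponentIn_range_inter [LocallyConnectedSpace X] {f : X → Y}
    (hf : Continuous f) {V : Set Y} (hV : IsOpen V) (a : Y) :
    IsOpen (f ⁻¹' connectedComponentIn (range f ∩ V) a) := by
  refine isOpen_iff_forall_mem_open.mpr fun t ht => ?_
  have htV : f t ∈ V := (connectedComponentIn_subset _ _ ht).2
  refine ⟨connectedComponentIn (f ⁻¹' V) t, ?_, (hV.preimage hf).connectedComponentIn,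
    mem_connectedComponentIn htV⟩
  have himage : f '' connectedComponentIn (f ⁻¹' V) t ⊆ connectedComponentIn (range f ∩ V) a := by
    rw [connectedComponentIn_eq ht]
    refine (isPreconnected_connectedComponentIn.image f hf.continuousOn).subset_connectedComponentIn
      (mem_image_of_mem f (mem_connectedComponentIn htV)) ?_
    rintro _ ⟨s, hs, rfl⟩
    exact ⟨mem_range_self s, connectedComponentIn_subset (f ⁻¹' V) t hs⟩
  exact image_subset_iff.mp himage

theorem exists_mem_nhds_range_inter_subset_connectedComponentIn [CompactSpace X]
    [LocallyConnectedSpace X] [T2Space Y] {f : X → Y} (hf : Continuous f) {V : Set Y}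
    (hV : IsOpen V) {a : Y} (ha : a ∈ range f ∩ V) :
    ∃ W ∈ 𝓝 a, range f ∩ W ⊆ connectedComponentIn (range f ∩ V) a := by
  set C := connectedComponentIn (range f ∩ V) a
  have hK : IsClosed (f '' (f ⁻¹' C)ᶜ) :=
    ((isOpen_preimage_connectedComponentIn_range_inter hf hV a).isClosed_compl.isCompact.image
      hf).isClosed
  have haK : a ∉ f '' (f ⁻¹' C)ᶜ := by
    rintro ⟨t, ht, rfl⟩
    exact ht (mem_connectedComponentIn ha)
  refine ⟨(f '' (f ⁻¹' C)ᶜ)ᶜ, hK.isOpen_compl.mem_nhds haK, ?_⟩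
  rintro _ ⟨⟨t, rfl⟩, htW⟩
  by_contra htC
  exact htW ⟨t, htC, rfl⟩

/-- The continuous image of `[0,1]` in `ℝⁿ` is weakly locally connected: for
every point `a` of the image and every `η > 0` there is `0 < ε < η` such that
every point of the image within distance `ε` of `a` lies in the same connected
component of the intersection of the image with `B_η(a)` as `a`. -/
theorem image_interval_weakly_locally_connected (n : ℕ)
    (f : ℝ → EuclideanSpace ℝ (Fin n)) (hf : ContinuousOn f (Set.Icc (0 : ℝ) 1)) :
    ∀ a ∈ f '' Set.Icc (0 : ℝ) 1, ∀ η > (0 : ℝ), ∃ ε : ℝ, 0 < ε ∧ ε < η ∧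
      ∀ x ∈ f '' Set.Icc (0 : ℝ) 1, ‖x - a‖ < ε →
        x ∈ connectedComponentIn ((f '' Set.Icc (0 : ℝ) 1) ∩ Metric.ball a η) a := by
  intro a ha η hη
  have := (convex_Icc (0 : ℝ) 1).locallyPathConnectedSpace
  have hrange : range ((Icc (0 : ℝ) 1).domRestrict f) = f '' Icc 0 1 := range_domRestrict f _
  obtain ⟨W, hW, hWC⟩ := exists_mem_nhds_range_inter_subset_connectedComponentIn hf.domRestrict
    Metric.isOpen_ball (a := a) (by rw [hrange]; exact ⟨ha, Metric.mem_ball_self hη⟩)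
  rw [hrange] at hWC
  obtain ⟨ε, hε, hεW⟩ := Metric.mem_nhds_iff.mp hW
  refine ⟨min ε (η / 2), by positivity, by linarith [min_le_right ε (η / 2)], fun x hx hxa => ?_⟩
  refine hWC ⟨hx, hεW ?_⟩
  rw [Metric.mem_ball, dist_eq_norm]
  exact hxa.trans_le (min_le_left _ _)
end

section
/- A nonempty subset A ⊆ ℝ^n is the image of a continuous map f : [0,1] → ℝ^n if and only if A is compact, connected, and locally connected (Hahn–Mazurkiewicz theorem). -/
/-!
A continuous image of `[0, 1]` in a Hausdorff space is compact and connected, and carries the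
quotient topology of a closed map out of the locally connected interval, so it is locally connected.

Conversely, let `X` be a compact, connected, locally connected metric space. A finite cover of `X`
by small connected open sets has a connected intersection graph, so a walk through all its vertices
lists a chain of small connected open sets, consecutive ones meeting, that covers `X`; the same
works inside any connected set, between any two of its points. Starting from `X` itself, replace
each set of the current chain by a chain through it at scale `2⁻ᵏ`, running from its overlap with
the previous set to its overlap with the next one, and pad these chains to a common length. Sending
`t` to a point of the `⌊t · length⌋`-th set of the `k`-th chain gives maps that converge uniformly,
since every set meets its parent in the previous chain. Nearby parameters land in equal or
consecutive sets, so the limit is continuous, and it is onto because every chain covers `X`.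
-/

open Set Metric Topology Filter Bornology

theorem SimpleGraph.Preconnected.exists_walk_forall_mem_support {V : Type*} {G : SimpleGraph V}
    (hG : G.Preconnected) (s : Finset V) (u v : V) : ∃ p : G.Walk u v, ∀ w ∈ s, w ∈ p.support := by
  classical
  induction s using Finset.induction_on generalizing u with
  | empty => exact ⟨(hG u v).some, by simp⟩
  | insert w s _ ih =>
    obtain ⟨q, hq⟩ := ih w
    refine ⟨(hG u w).some.append q, ?_⟩
    simp only [Finset.mem_insert, forall_eq_or_imp, SimpleGraph.Walk.mem_support_append_iff]
    exact ⟨Or.inr q.start_mem_support, fun x hx => Or.inr (hq x hx)⟩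

theorem exists_isOpen_isConnected_diam_le {X : Type*} [PseudoMetricSpace X]
    [LocallyConnectedSpace X] (x : X) {ε : ℝ} (hε : 0 < ε) :
    ∃ V, IsOpen V ∧ IsConnected V ∧ x ∈ V ∧ diam V ≤ ε := by
  obtain ⟨V, ⟨hVo, hxV, hVc⟩, hVball⟩ :=
    (LocallyConnectedSpace.open_connected_basis x).mem_iff.mp (ball_mem_nhds x (half_pos hε))
  refine ⟨V, hVo, hVc, hxV, ?_⟩
  calc diam V ≤ diam (ball x (ε / 2)) := diam_mono hVball isBounded_ball
    _ ≤ 2 * (ε / 2) := diam_ball (half_pos hε).le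
    _ = ε := by ring

theorem dist_le_diam_add_diam {X : Type*} [PseudoMetricSpace X] {A B : Set X} (hA : IsBounded A)
    (hB : IsBounded B) (hAB : (A ∩ B).Nonempty) {x y : X} (hx : x ∈ A) (hy : y ∈ B) :
    dist x y ≤ diam A + diam B :=
  (dist_le_diam_of_mem (hA.union hB) (Or.inl hx) (Or.inr hy)).trans (diam_union' hAB)

theorem locallyConnectedSpace_of_continuous_surjective {X Y : Type*} [TopologicalSpace X]
    [TopologicalSpace Y] [CompactSpace X] [LocallyConnectedSpace X] [T2Space Y] {f : X → Y}
    (hf : Continuous f) (hsurj : Function.Surjective f) : LocallyConnectedSpace Y :=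
  (hf.isClosedMap.isQuotientMap hf hsurj).isCoinducing.locallyConnectedSpace

namespace HahnMazurkiewicz

section Blocks

variable {X : Type*}

theorem nonempty_inter_div_mod_succ {L : ℕ → ℕ → Set X} {M N : ℕ}
    (hL : ∀ i j, (L i j ∩ L i (j + 1)).Nonempty)
    (hLL : ∀ i, i + 1 < N → (L i (M - 1) ∩ L (i + 1) 0).Nonempty) {m : ℕ} (hm : m + 1 < N * M) :
    (L (m / M) (m % M) ∩ L ((m + 1) / M) ((m + 1) % M)).Nonempty := by
  have hM : 0 < M := Nat.pos_of_mul_pos_left (by omega : 0 < N * M)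
  obtain ⟨q, r, hr, rfl⟩ : ∃ q r, r < M ∧ m = M * q + r :=
    ⟨m / M, m % M, Nat.mod_lt m hM, (Nat.div_add_mod m M).symm⟩
  rcases (Nat.succ_le_of_lt hr).lt_or_eq with hr1 | rfl
  · rw [add_assoc]
    simp only [Nat.mul_add_div hM, Nat.mul_add_mod, Nat.div_eq_of_lt hr, Nat.div_eq_of_lt hr1,
      Nat.mod_eq_of_lt hr, Nat.mod_eq_of_lt hr1, add_zero]
    exact hL q r
  · have hq : q + 1 < N := Nat.lt_of_mul_lt_mul_left (a := r + 1) (by linarith)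
    rw [show (r + 1) * q + r + 1 = (r + 1) * (q + 1) by ring, Nat.mul_div_cancel_left _ hM,
      Nat.mul_mod_right, Nat.mul_add_div hM, Nat.div_eq_of_lt hr, Nat.mul_add_mod,
      Nat.mod_eq_of_lt hr, add_zero]
    exact hLL q hq

theorem nonempty_inter_min_succ {s : ℕ → Set X} {K : ℕ}
    (hs : ∀ i, i + 1 < K → (s i ∩ s (i + 1)).Nonempty) (hne : ∀ i, (s i).Nonempty) (i : ℕ) :
    (s (min i (K - 1)) ∩ s (min (i + 1) (K - 1))).Nonempty := by
  rcases lt_or_ge (i + 1) K with h | h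
  · rw [min_eq_left (by omega), min_eq_left (by omega)]
    exact hs i h
  · rw [min_eq_right (by omega), min_eq_right (by omega), inter_self]
    exact hne _

end Blocks

section Topological

variable {X ι : Type*} [TopologicalSpace X]

def intersectionGraph (V : ι → Set X) : SimpleGraph ι :=
  SimpleGraph.fromRel fun i j => (V i ∩ V j).Nonempty

theorem intersectionGraph_preconnected {V : ι → Set X} {U : Set X} (hVo : ∀ i, IsOpen (V i))
    (hVU : ∀ i, (V i ∩ U).Nonempty) (hU : IsPreconnected U) (hUV : U ⊆ ⋃ i, V i) :
    (intersectionGraph V).Preconnected := by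
  intro i j
  by_contra hij
  set S := {k | (intersectionGraph V).Reachable i k}
  have hcover : U ⊆ (⋃ k ∈ S, V k) ∪ ⋃ k ∈ Sᶜ, V k := fun x hx => by
    obtain ⟨k, hk⟩ := mem_iUnion.mp (hUV hx)
    by_cases h : k ∈ S
    exacts [Or.inl (mem_biUnion h hk), Or.inr (mem_biUnion h hk)]
  obtain ⟨y, hyi, hyU⟩ := hVU i
  obtain ⟨z, hzj, hzU⟩ := hVU j
  obtain ⟨x, -, hxA, hxB⟩ := hU _ _ (isOpen_biUnion fun k _ => hVo k)
    (isOpen_biUnion fun k _ => hVo k) hcover ⟨y, hyU, mem_biUnion (.refl i) hyi⟩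
    ⟨z, hzU, mem_biUnion hij hzj⟩
  obtain ⟨k, hk, hxk⟩ := mem_iUnion₂.mp hxA
  obtain ⟨l, hl, hxl⟩ := mem_iUnion₂.mp hxB
  apply hl
  rcases eq_or_ne k l with rfl | hkl
  · exact hk
  · exact hk.trans (SimpleGraph.Adj.reachable <|
      (SimpleGraph.fromRel_adj _ _ _).mpr ⟨hkl, Or.inl ⟨x, hxk, hxl⟩⟩)

/-- Only the first `length` sets are needed to cover `X`; indexing by all of `ℕ` lets consecutive
sets meet at every index. -/
structure LinkedCover (X : Type*) [TopologicalSpace X] where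
  length : ℕ
  length_pos : 0 < length
  set : ℕ → Set X
  isOpen_set (i : ℕ) : IsOpen (set i)
  isConnected_set (i : ℕ) : IsConnected (set i)
  nonempty_inter_set_succ (i : ℕ) : (set i ∩ set (i + 1)).Nonempty
  exists_lt_length_mem (x : X) : ∃ i < length, x ∈ set i

namespace LinkedCover

def trivial [ConnectedSpace X] : LinkedCover X where
  length := 1
  length_pos := one_pos
  set _ := univ
  isOpen_set _ := isOpen_univ
  isConnected_set _ := isConnected_univ
  nonempty_inter_set_succ _ := by simp
  exists_lt_length_mem _ := ⟨0, one_pos, mem_univ _⟩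

def Refines (D C : LinkedCover X) (M : ℕ) : Prop :=
  D.length = C.length * M ∧ ∀ m < D.length, (D.set m ∩ C.set (m / M)).Nonempty

noncomputable def point (C : LinkedCover X) (i : ℕ) : X := (C.isConnected_set i).nonempty.some

theorem point_mem (C : LinkedCover X) (i : ℕ) : C.point i ∈ C.set i := Nonempty.some_mem _

/-- `[i / length, (i + 1) / length)` is sent to `i`, and `1` to the last index. -/
noncomputable def index (C : LinkedCover X) (t : ℝ) : ℕ := min ⌊t * C.length⌋₊ (C.length - 1)

theorem index_lt_length (C : LinkedCover X) (t : ℝ) : C.index t < C.length := by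
  have := C.length_pos
  unfold index
  omega

theorem index_natCast_div {C : LinkedCover X} {i : ℕ} (hi : i < C.length) :
    C.index (i / C.length) = i := by
  have : (C.length : ℝ) ≠ 0 := Nat.cast_ne_zero.mpr C.length_pos.ne'
  rw [index, div_mul_cancel₀ _ this, Nat.floor_natCast]
  omega

theorem index_le_index_add_one (C : LinkedCover X) {s t : ℝ} (hst : |s - t| * C.length ≤ 1) :
    C.index s ≤ C.index t + 1 := by
  have : (s - t) * C.length ≤ |s - t| * C.length :=
    mul_le_mul_of_nonneg_right (le_abs_self _) (Nat.cast_nonneg _)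
  have : ⌊s * C.length⌋₊ ≤ ⌊t * C.length⌋₊ + 1 := Nat.lt_succ_iff.mp <|
    (Nat.floor_lt' (Nat.succ_ne_zero _)).mpr <| by
      push_cast
      linarith [Nat.lt_floor_add_one (t * C.length)]
  unfold index
  omega

theorem Refines.index_div {D C : LinkedCover X} {M : ℕ} (h : D.Refines C M) (t : ℝ) :
    D.index t / M = C.index t := by
  have hM : 0 < M := Nat.pos_of_mul_pos_left (h.1 ▸ D.length_pos)
  obtain ⟨N, hN⟩ : ∃ N, C.length = N + 1 := Nat.exists_eq_add_one.mpr C.length_pos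
  have hlast : (C.length * M - 1) / M = C.length - 1 := by
    rw [hN, Nat.add_sub_cancel]
    refine Nat.div_eq_of_lt_le ?_ ?_ <;> rw [add_mul, one_mul] <;> omega
  rw [index, index, h.1, Monotone.map_min fun _ _ => Nat.div_le_div_right, hlast, Nat.cast_mul,
    ← mul_assoc, ← Nat.floor_div_natCast, mul_div_cancel_right₀ _ (by positivity)]

end LinkedCover

end Topological

variable {X : Type*} [MetricSpace X]

theorem exists_chain_cover [CompactSpace X] [LocallyConnectedSpace X] {U : Set X}
    (hU : IsPreconnected U) {a b : X} (ha : a ∈ U) (hb : b ∈ U) {ε : ℝ} (hε : 0 < ε) :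
    ∃ (n : ℕ) (V : ℕ → Set X),
      (∀ i, IsOpen (V i) ∧ IsConnected (V i) ∧ diam (V i) ≤ ε ∧ (V i ∩ U).Nonempty) ∧
      (∀ i, (V i ∩ V (i + 1)).Nonempty) ∧ a ∈ V 0 ∧ (∀ i, n ≤ i → b ∈ V i) ∧
      ∀ x ∈ U, ∃ i ≤ n, x ∈ V i := by
  classical
  choose W hWo hWc hxW hWd using fun x : X => exists_isOpen_isConnected_diam_le x hε
  obtain ⟨s, hs⟩ :=
    isCompact_univ.elim_finite_subcover W hWo fun x _ => mem_iUnion.mpr ⟨x, hxW x⟩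
  set t := s.filter fun x => (W x ∩ U).Nonempty
  have hcov : ∀ y ∈ U, ∃ x : t, y ∈ W x := fun y hy => by
    obtain ⟨x, hx, hyx⟩ := mem_iUnion₂.mp (hs (mem_univ y))
    exact ⟨⟨x, Finset.mem_filter.mpr ⟨hx, y, hyx, hy⟩⟩, hyx⟩
  have hconn := intersectionGraph_preconnected (V := fun x : t => W x) (fun x => hWo x)
    (fun x => (Finset.mem_filter.mp x.2).2) hU fun y hy => mem_iUnion.mpr (hcov y hy)
  obtain ⟨xa, hxa⟩ := hcov a ha
  obtain ⟨xb, hxb⟩ := hcov b hb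
  obtain ⟨p, hp⟩ := hconn.exists_walk_forall_mem_support Finset.univ xa xb
  refine ⟨p.length, fun i => W (p.getVert i), fun i => ⟨hWo _, hWc _, hWd _, ?_⟩, fun i => ?_,
    by simpa using hxa, fun i hi => by simpa [p.getVert_of_length_le hi] using hxb,
    fun y hy => ?_⟩
  · exact (Finset.mem_filter.mp (p.getVert i).2).2
  · rcases lt_or_ge i p.length with hi | hi
    · obtain ⟨-, h | h⟩ := (SimpleGraph.fromRel_adj _ _ _).mp (p.adj_getVert_succ hi)
      exacts [h, inter_comm _ _ ▸ h]
    · simp only [p.getVert_of_length_le hi, p.getVert_of_length_le (Nat.le_succ_of_le hi),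
        inter_self]
      exact ⟨b, hxb⟩
  · obtain ⟨x, hyx⟩ := hcov y hy
    obtain ⟨i, rfl, hi⟩ := SimpleGraph.Walk.mem_support_iff_exists_getVert.mp (hp x (by simp))
    exact ⟨i, hi, hyx⟩

namespace LinkedCover

theorem exists_refines [CompactSpace X] [LocallyConnectedSpace X] (C : LinkedCover X) {ε : ℝ}
    (hε : 0 < ε) : ∃ (D : LinkedCover X) (M : ℕ), (∀ i, diam (D.set i) ≤ ε) ∧ D.Refines C M := by
  -- the chains through `C.set i` and `C.set (i + 1)` are glued at `b i`
  choose b hb using C.nonempty_inter_set_succ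
  let a : ℕ → X := fun
    | 0 => C.point 0
    | i + 1 => b i
  have ha : ∀ i, a i ∈ C.set i := fun
    | 0 => C.point_mem 0
    | i + 1 => (hb i).2
  choose n L hL hlink hstart hend hcov using fun i =>
    exists_chain_cover (C.isConnected_set i).isPreconnected (ha i) (hb i).1 hε
  set N := C.length
  set M := (Finset.range N).sup n + 1
  have hnM : ∀ i < N, n i < M := fun i hi =>
    Nat.lt_succ_of_le (Finset.le_sup (Finset.mem_range.mpr hi))
  have hM : 0 < M := Nat.succ_pos _
  let idx m := min m (N * M - 1)
  refine ⟨⟨N * M, Nat.mul_pos C.length_pos hM, fun m => L (idx m / M) (idx m % M),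
    fun m => (hL _ _).1, fun m => (hL _ _).2.1, fun m => ?_, fun x => ?_⟩,
    M, fun m => (hL _ _).2.2.1, rfl, fun m hm => ?_⟩
  · refine nonempty_inter_min_succ (s := fun m => L (m / M) (m % M))
      (fun m hm => nonempty_inter_div_mod_succ hlink (fun i hi => ?_) hm)
      (fun m => (hL _ _).2.1.nonempty) m
    exact ⟨b i, hend i (M - 1) (Nat.le_sub_one_of_lt (hnM i (by omega))), hstart (i + 1)⟩
  · obtain ⟨i, hi, hxi⟩ := C.exists_lt_length_mem x
    obtain ⟨j, hj, hxj⟩ := hcov i x hxi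
    have hjM : j < M := hj.trans_lt (hnM i hi)
    have hm : M * i + j < N * M := by nlinarith
    refine ⟨M * i + j, hm, ?_⟩
    simpa only [idx, min_eq_left (Nat.le_sub_one_of_lt hm), Nat.mul_add_div hM,
      Nat.div_eq_of_lt hjM, Nat.mul_add_mod, Nat.mod_eq_of_lt hjM, add_zero] using hxj
  · simp only [idx, min_eq_left (Nat.le_sub_one_of_lt hm)]
    exact (hL _ _).2.2.2

end LinkedCover

theorem exists_seq_refines [CompactSpace X] [ConnectedSpace X] [LocallyConnectedSpace X] :
    ∃ (C : ℕ → LinkedCover X) (M : ℕ → ℕ),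
      (∀ k i, diam ((C k).set i) ≤ 1 / 2 ^ k) ∧ ∀ k, (C (k + 1)).Refines (C k) (M k) := by
  choose D M hD hDM using fun (k : ℕ) (C : LinkedCover X) =>
    C.exists_refines (ε := 1 / 2 ^ k) (by positivity)
  let C : ℕ → LinkedCover X := fun k =>
    Nat.rec (D 0 LinkedCover.trivial) (fun k Ck => D (k + 1) Ck) k
  refine ⟨C, fun k => M (k + 1) (C k), fun k => ?_, fun k => hDM _ _⟩
  cases k with
  | zero => exact hD 0 _
  | succ k => exact hD (k + 1) _

section Limit

variable {C : ℕ → LinkedCover X} {M : ℕ → ℕ}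

noncomputable def approx (C : ℕ → LinkedCover X) (k : ℕ) (t : ℝ) : X :=
  (C k).point ((C k).index t)

theorem approx_mem (C : ℕ → LinkedCover X) (k : ℕ) (t : ℝ) :
    approx C k t ∈ (C k).set ((C k).index t) :=
  (C k).point_mem _

theorem dist_approx_succ_le [CompactSpace X]
    (hdiam : ∀ k i, diam ((C k).set i) ≤ 1 / 2 ^ k)
    (hC : ∀ k, (C (k + 1)).Refines (C k) (M k)) (k : ℕ) (t : ℝ) :
    dist (approx C k t) (approx C (k + 1) t) ≤ 3 / 2 / 2 ^ k := by
  have hnest := (hC k).2 _ ((C (k + 1)).index_lt_length t)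
  rw [(hC k).index_div t, inter_comm] at hnest
  calc dist (approx C k t) (approx C (k + 1) t)
      ≤ diam ((C k).set _) + diam ((C (k + 1)).set _) :=
        dist_le_diam_add_diam (.all _) (.all _) hnest (approx_mem C k t) (approx_mem C (k + 1) t)
    _ ≤ 1 / 2 ^ k + 1 / 2 ^ (k + 1) := add_le_add (hdiam _ _) (hdiam _ _)
    _ = 3 / 2 / 2 ^ k := by rw [pow_succ]; ring

theorem dist_approx_le_of_abs_sub_mul_le [CompactSpace X]
    (hdiam : ∀ k i, diam ((C k).set i) ≤ 1 / 2 ^ k) {k : ℕ} {s t : ℝ}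
    (hst : |s - t| * (C k).length ≤ 1) : dist (approx C k s) (approx C k t) ≤ 2 / 2 ^ k := by
  have hlink : ∀ {t₁ t₂ : ℝ}, (C k).index t₂ = (C k).index t₁ + 1 →
      dist (approx C k t₁) (approx C k t₂) ≤ 2 / 2 ^ k := fun {t₁ t₂} h => by
    have hmeet := (C k).nonempty_inter_set_succ ((C k).index t₁)
    rw [← h] at hmeet
    calc _ ≤ diam _ + diam _ :=
          dist_le_diam_add_diam (.all _) (.all _) hmeet (approx_mem C k _) (approx_mem C k _)
      _ ≤ 1 / 2 ^ k + 1 / 2 ^ k := add_le_add (hdiam _ _) (hdiam _ _)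
      _ = 2 / 2 ^ k := by ring
  have h₁ := (C k).index_le_index_add_one hst
  have h₂ := (C k).index_le_index_add_one (s := t) (t := s) (by rwa [abs_sub_comm])
  obtain h | h | h : (C k).index s = (C k).index t ∨ (C k).index t = (C k).index s + 1 ∨
      (C k).index s = (C k).index t + 1 := by omega
  · rw [approx, approx, h, dist_self]
    positivity
  · exact hlink h
  · rw [dist_comm]
    exact hlink h

noncomputable def limitCurve [Nonempty X] (C : ℕ → LinkedCover X) (t : ℝ) : X :=
  limUnder atTop fun k => approx C k t

theorem dist_approx_limitCurve_le [CompactSpace X] [Nonempty X]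
    (hdiam : ∀ k i, diam ((C k).set i) ≤ 1 / 2 ^ k)
    (hC : ∀ k, (C (k + 1)).Refines (C k) (M k)) (k : ℕ) (t : ℝ) :
    dist (approx C k t) (limitCurve C t) ≤ 3 / 2 ^ k :=
  dist_le_of_le_geometric_two_of_tendsto (fun k => dist_approx_succ_le hdiam hC k t)
    (cauchySeq_of_le_geometric_two fun k => dist_approx_succ_le hdiam hC k t).tendsto_limUnder k

theorem continuous_limitCurve [CompactSpace X] [Nonempty X]
    (hdiam : ∀ k i, diam ((C k).set i) ≤ 1 / 2 ^ k)
    (hC : ∀ k, (C (k + 1)).Refines (C k) (M k)) : Continuous (limitCurve C) := by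
  refine Metric.continuous_iff.mpr fun t ε hε => ?_
  obtain ⟨k, hk⟩ := exists_pow_lt_of_lt_one (by positivity : 0 < ε / 8)
    (by norm_num : (1 / 2 : ℝ) < 1)
  rw [div_pow, one_pow] at hk
  have hN : (0 : ℝ) < (C k).length := Nat.cast_pos.mpr (C k).length_pos
  refine ⟨1 / (C k).length, by positivity, fun s hs => ?_⟩
  have hst : |s - t| * (C k).length ≤ 1 := by
    rw [← Real.dist_eq, ← le_div_iff₀ hN]
    exact hs.le
  calc dist (limitCurve C s) (limitCurve C t)
      ≤ dist (limitCurve C s) (approx C k s) + dist (approx C k s) (approx C k t) +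
          dist (approx C k t) (limitCurve C t) := dist_triangle4 _ _ _ _
    _ ≤ 3 / 2 ^ k + 2 / 2 ^ k + 3 / 2 ^ k := by
        gcongr
        · rw [dist_comm]
          exact dist_approx_limitCurve_le hdiam hC k s
        · exact dist_approx_le_of_abs_sub_mul_le hdiam hst
        · exact dist_approx_limitCurve_le hdiam hC k t
    _ = 8 * (1 / 2 ^ k) := by ring
    _ < ε := by linarith

theorem image_limitCurve_Icc [CompactSpace X] [Nonempty X]
    (hdiam : ∀ k i, diam ((C k).set i) ≤ 1 / 2 ^ k)
    (hC : ∀ k, (C (k + 1)).Refines (C k) (M k)) : limitCurve C '' Icc 0 1 = univ := by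
  have hclosed : IsClosed (limitCurve C '' Icc 0 1) :=
    (isCompact_Icc.image (continuous_limitCurve hdiam hC)).isClosed
  refine eq_univ_of_forall fun p => hclosed.closure_eq ▸ Metric.mem_closure_iff.mpr fun ε hε => ?_
  obtain ⟨k, hk⟩ := exists_pow_lt_of_lt_one (by positivity : 0 < ε / 4)
    (by norm_num : (1 / 2 : ℝ) < 1)
  rw [div_pow, one_pow] at hk
  obtain ⟨i, hi, hpi⟩ := (C k).exists_lt_length_mem p
  have hmem := approx_mem C k (i / (C k).length)
  rw [(C k).index_natCast_div hi] at hmem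
  refine ⟨limitCurve C (i / (C k).length),
    mem_image_of_mem _ ⟨by positivity, div_le_one_of_le₀ (mod_cast hi.le) (Nat.cast_nonneg _)⟩, ?_⟩
  calc dist p (limitCurve C (i / (C k).length))
      ≤ dist p (approx C k (i / (C k).length)) +
          dist (approx C k (i / (C k).length)) (limitCurve C (i / (C k).length)) :=
        dist_triangle _ _ _
    _ ≤ 1 / 2 ^ k + 3 / 2 ^ k :=
        add_le_add ((dist_le_diam_of_mem (.all _) hpi hmem).trans (hdiam k i))
          (dist_approx_limitCurve_le hdiam hC k _)
    _ = 4 * (1 / 2 ^ k) := by ring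
    _ < ε := by linarith

end Limit

theorem exists_continuous_image_Icc_eq_univ [CompactSpace X] [ConnectedSpace X]
    [LocallyConnectedSpace X] : ∃ f : ℝ → X, Continuous f ∧ f '' Icc 0 1 = univ := by
  obtain ⟨C, M, hdiam, hC⟩ := exists_seq_refines (X := X)
  exact ⟨limitCurve C, continuous_limitCurve hdiam hC, image_limitCurve_Icc hdiam hC⟩

end HahnMazurkiewicz

theorem hahn_mazurkiewicz_general (n : ℕ) (A : Set (EuclideanSpace ℝ (Fin n))) :
    (∃ f : ℝ → EuclideanSpace ℝ (Fin n),
        ContinuousOn f (Set.Icc (0 : ℝ) 1) ∧ f '' Set.Icc (0 : ℝ) 1 = A) ↔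
      IsCompact A ∧ IsConnected A ∧ LocallyConnectedSpace A := by
  constructor
  · rintro ⟨f, hf, rfl⟩
    have := (convex_Icc (0 : ℝ) 1).locallyPathConnectedSpace
    exact ⟨isCompact_Icc.image_of_continuousOn hf, (isConnected_Icc zero_le_one).image f hf,
      locallyConnectedSpace_of_continuous_surjective (hf.mapsToRestrict (mapsTo_image f _))
        (surjective_mapsTo_image_restrict f _)⟩
  · rintro ⟨hAc, hAconn, hAloc⟩
    have := isCompact_iff_compactSpace.mp hAc
    have := isConnected_iff_connectedSpace.mp hAconn
    obtain ⟨g, hg, hgA⟩ := HahnMazurkiewicz.exists_continuous_image_Icc_eq_univ (X := A)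
    refine ⟨(↑) ∘ g, (continuous_subtype_val.comp hg).continuousOn, ?_⟩
    rw [image_comp, hgA, image_univ, Subtype.range_coe]

/-- **Hahn–Mazurkiewicz theorem.** A nonempty subset `A ⊆ ℝⁿ` is the image of a
continuous map `f : [0,1] → ℝⁿ` if and only if `A` is compact, connected, and
locally connected. -/
theorem hahn_mazurkiewicz (n : ℕ) (A : Set (EuclideanSpace ℝ (Fin n)))
    (hA : A.Nonempty) :
    (∃ f : ℝ → EuclideanSpace ℝ (Fin n),
        ContinuousOn f (Set.Icc (0 : ℝ) 1) ∧ f '' Set.Icc (0 : ℝ) 1 = A) ↔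
      IsCompact A ∧ IsConnected A ∧ LocallyConnectedSpace A :=
  hahn_mazurkiewicz_general n A
end

section
/- Every nonempty compact subset of ℝ^n is the continuous image of the Cantor set (Hausdorff's theorem). -/
open Set

theorem exists_continuousOn_image_eq_of_continuous_surjective {X Y : Type*}
    [TopologicalSpace X] [TopologicalSpace Y] [Nonempty Y] {s : Set X} {t : Set Y}
    (F : s → t) (hF : Continuous F) (hFs : Function.Surjective F) :
    ∃ g : X → Y, ContinuousOn g s ∧ g '' s = t := by
  classical
  let g : X → Y := fun x => if hx : x ∈ s then F ⟨x, hx⟩ else Classical.arbitrary Y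
  have hg : s.domRestrict g = Subtype.val ∘ F := funext fun x => dif_pos x.2
  refine ⟨g, continuousOn_iff_continuous_domRestrict.mpr (hg ▸ by fun_prop), ?_⟩
  rw [← range_domRestrict, hg, range_comp, hFs.range_eq, image_univ, Subtype.range_coe]

theorem IsCompact.exists_continuousOn_cantorSet_image_eq {X : Type*} [MetricSpace X]
    {A : Set X} (hAc : IsCompact A) (hA : A.Nonempty) :
    ∃ g : ℝ → X, ContinuousOn g cantorSet ∧ g '' cantorSet = A := by
  have : CompactSpace A := isCompact_iff_compactSpace.mp hAc
  have : Nonempty A := hA.to_subtype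
  have : Nonempty X := hA.nonempty
  obtain ⟨f, hf, hfs⟩ := exists_nat_bool_continuous_surjective_of_compact A
  exact exists_continuousOn_image_eq_of_continuous_surjective (f ∘ cantorSetHomeomorphNatToBool)
    (hf.comp cantorSetHomeomorphNatToBool.continuous)
    (hfs.comp cantorSetHomeomorphNatToBool.surjective)

/-- **Hausdorff's theorem.** Every nonempty compact subset of `ℝⁿ` is the
continuous image of the middle-thirds Cantor set. -/
theorem hausdorff_cantor_surjection (n : ℕ) (A : Set (EuclideanSpace ℝ (Fin n)))
    (hA : A.Nonempty) (hAc : IsCompact A) :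
    ∃ g : ℝ → EuclideanSpace ℝ (Fin n),
      ContinuousOn g cantorSet ∧ g '' cantorSet = A :=
  hAc.exists_continuousOn_cantorSet_image_eq hA
end

section
/- Any bijective map f : [0,1] → [0,1]^2 is discontinuous (Netto's theorem). -/
open Set Function

/-!
A continuous bijection `[0,1] → [0,1]²` would be a homeomorphism, since `[0,1]` is compact.
Its inverse would send the uncountably many horizontal segments of the square to pairwise
disjoint connected subsets of `ℝ` with more than one point. Each of these contains an interval
with nonempty interior, and `ℝ` is separable, so there can only be countably many of them.
-/

theorem IsPreconnected.interior_nonempty_of_ne {α : Type*} [LinearOrder α] [TopologicalSpace α]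
    [OrderTopology α] [DenselyOrdered α] {s : Set α} (hs : IsPreconnected s) {a b : α}
    (ha : a ∈ s) (hb : b ∈ s) (hab : a ≠ b) : (interior s).Nonempty := by
  wlog hlt : a < b generalizing a b
  · exact this hb ha hab.symm (hab.lt_or_gt.resolve_left hlt)
  obtain ⟨c, hac, hcb⟩ := exists_between hlt
  exact ⟨c, interior_mono (hs.Icc_subset ha hb)
    (mem_interior_iff_mem_nhds.2 (Icc_mem_nhds hac hcb))⟩

theorem countable_of_continuous_injective_prod {α Y Z : Type*} [LinearOrder α]
    [TopologicalSpace α] [OrderTopology α] [DenselyOrdered α] [TopologicalSpace.SeparableSpace α]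
    [TopologicalSpace Y] [PreconnectedSpace Y] [Nontrivial Y] [TopologicalSpace Z]
    {g : Y × Z → α} (hg : Continuous g) (hinj : Injective g) : Countable Z := by
  obtain ⟨a, b, hab⟩ := exists_pair_ne Y
  have hdisj : (univ : Set Z).PairwiseDisjoint fun z => range fun y => g (y, z) := by
    rintro z - z' - hzz'
    refine disjoint_left.2 ?_
    rintro _ ⟨y, rfl⟩ ⟨y', hy'⟩
    exact hzz' (congrArg Prod.snd (hinj hy')).symm
  have hint : ∀ z ∈ (univ : Set Z), (interior (range fun y => g (y, z))).Nonempty := fun z _ =>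
    (isPreconnected_range (by fun_prop)).interior_nonempty_of_ne (mem_range_self a)
      (mem_range_self b) fun h => hab (congrArg Prod.fst (hinj h))
  exact countable_univ_iff.1 (hdisj.countable_of_nonempty_interior hint)

theorem not_countable_Icc_real {a b : ℝ} (hab : a < b) : ¬ Countable (Icc a b) := by
  rw [← Cardinal.mk_le_aleph0_iff, Cardinal.mk_Icc_real hab, not_le]
  exact Cardinal.aleph0_lt_continuum

/-- **Netto's theorem.** No bijection from `[0,1]` onto `[0,1]²` is
continuous. -/
theorem netto (f : ℝ → ℝ × ℝ)
    (hbij : Set.BijOn f (Set.Icc (0 : ℝ) 1) (Set.Icc (0 : ℝ) 1 ×ˢ Set.Icc (0 : ℝ) 1)) :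
    ¬ ContinuousOn f (Set.Icc (0 : ℝ) 1) := by
  intro hf
  have e : Icc (0 : ℝ) 1 ≃ₜ Icc (0 : ℝ) 1 × Icc (0 : ℝ) 1 :=
    ((hf.mapsToRestrict hbij.mapsTo).homeoOfEquivCompactToT2 (f := hbij.equiv f)).trans
      (Homeomorph.Set.prod _ _)
  have : Countable (Icc (0 : ℝ) 1) := countable_of_continuous_injective_prod
    (continuous_subtype_val.comp e.symm.continuous) (Subtype.val_injective.comp e.symm.injective)
  exact not_countable_Icc_real zero_lt_one this
end
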